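/- The function g(t, τ) = βk ∫_0^{min(t,τ)} ρ_S(t-ξ)ρ_I(t-ξ)e^{-μξ} dξ + ρ₀(τ-t)e^{-μt}, where ρ_I solves the classical SIS ODE and ρ_S = 1 - ρ_I, satisfies the transport equation ∂_t g + ∂_τ g + μg = βk·ρ_S(t)ρ_I(t) for all 0 < t < τ, given that ρ₀ is differentiable. -/

import Mathlib

open Real MeasureTheory

/-- The function
g(t,τ) = βk ∫_0^{min(t,τ)} ρ_S(t-ξ)ρ_I(t-ξ)e^{-μξ} dξ + ρ₀(τ-t)e^{-μt},
where ρ_I solves the classical SIS ODE and ρ_S = 1 - ρ_I, satisfies the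
transport equation ∂_t g + ∂_τ g + μ g = βk ρ_S(t)ρ_I(t) for all 0 < t < τ. -/
theorem grp_sis_transport_solution
    (β k μ : ℝ) (hβ : 0 < β) (hk : 0 < k) (hμ : 0 < μ)
    (ρI : ℝ → ℝ) (hρIrange : ∀ t ≥ (0:ℝ), ρI t ∈ Set.Ioo (0:ℝ) 1)
    (hρI' : ∀ t, HasDerivAt ρI (-μ * ρI t + β * k * (1 - ρI t) * ρI t) t)
    (ρS : ℝ → ℝ) (hρS : ∀ t, ρS t = 1 - ρI t)
    (ρ₀ : ℝ → ℝ) (hρ₀ : Differentiable ℝ ρ₀) (hρ₀zero : ∀ s < (0:ℝ), ρ₀ s = 0)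
    (g : ℝ → ℝ → ℝ)
    (hg : ∀ t τ, g t τ =
      β * k * (∫ ξ in (0:ℝ)..(min t τ), ρS (t - ξ) * ρI (t - ξ) * Real.exp (-μ * ξ))
        + ρ₀ (τ - t) * Real.exp (-μ * t)) :
    ∀ t τ, 0 < t → t < τ →
      deriv (fun s => g s τ) t + deriv (fun s => g t s) τ + μ * g t τ
        = β * k * ρS t * ρI t := by
  intro t τ ht htτ
  -- continuity of the integrand
  have hρIc : Continuous ρI := by
    rw [continuous_iff_continuousAt]
    exact fun x => (hρI' x).continuousAt
  have hρSc : Continuous ρS := by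
    have : ρS = fun x => 1 - ρI x := funext hρS
    rw [this]; exact continuous_const.sub hρIc
  have hfc : Continuous (fun u => ρS u * ρI u * Real.exp (μ * u)) :=
    (hρSc.mul hρIc).mul (Real.continuous_exp.comp (continuous_const.mul continuous_id))
  set F : ℝ → ℝ := fun s => ∫ u in (0:ℝ)..s, ρS u * ρI u * Real.exp (μ * u) with hFdef
  have hF : ∀ s, HasDerivAt F (ρS s * ρI s * Real.exp (μ * s)) s := fun s =>
    (hfc.integral_hasStrictDerivAt 0 s).hasDerivAt
  -- change of variables
  have hsub : ∀ s : ℝ, (∫ ξ in (0:ℝ)..s, ρS (s - ξ) * ρI (s - ξ) * Real.exp (-μ * ξ))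
      = Real.exp (-μ * s) * F s := by
    intro s
    have h1 := intervalIntegral.integral_comp_sub_left
      (fun u => ρS u * ρI u * Real.exp (-μ * (s - u))) s (a := 0) (b := s)
    have h2 : (∫ ξ in (0:ℝ)..s, ρS (s - ξ) * ρI (s - ξ) * Real.exp (-μ * ξ))
        = ∫ ξ in (0:ℝ)..s, (fun u => ρS u * ρI u * Real.exp (-μ * (s - u))) (s - ξ) := by
      apply intervalIntegral.integral_congr
      intro ξ _
      simp
    rw [h2, h1]
    simp only [sub_self, sub_zero]
    have h3 : (∫ u in (0:ℝ)..s, ρS u * ρI u * Real.exp (-μ * (s - u)))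
        = ∫ u in (0:ℝ)..s, Real.exp (-μ * s) * (ρS u * ρI u * Real.exp (μ * u)) := by
      apply intervalIntegral.integral_congr
      intro u _
      show ρS u * ρI u * Real.exp (-μ * (s - u)) = Real.exp (-μ * s) * (ρS u * ρI u * Real.exp (μ * u))
      rw [show -μ * (s - u) = -μ * s + μ * u by ring, Real.exp_add]
      ring
    rw [h3, intervalIntegral.integral_const_mul]
  -- derivative in t
  have hμe : ∀ s : ℝ, HasDerivAt (fun x => Real.exp (-μ * x)) (-μ * Real.exp (-μ * s)) s := by
    intro s
    simpa [mul_comm] using ((hasDerivAt_id s).const_mul (-μ)).exp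
  have hDt : HasDerivAt (fun s => g s τ)
      (β * k * (-μ * Real.exp (-μ * t) * F t
          + Real.exp (-μ * t) * (ρS t * ρI t * Real.exp (μ * t)))
        + (-(deriv ρ₀ (τ - t)) * Real.exp (-μ * t) + ρ₀ (τ - t) * (-μ * Real.exp (-μ * t)))) t := by
    have heq : (fun s => g s τ) =ᶠ[nhds t]
        (fun s => β * k * (Real.exp (-μ * s) * F s) + ρ₀ (τ - s) * Real.exp (-μ * s)) := by
      filter_upwards [Filter.Tendsto.eventually_lt_const htτ (Filter.tendsto_id)] with s hs
      simp only [id] at hs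
      rw [hg s τ, min_eq_left hs.le, hsub s]
    apply HasDerivAt.congr_of_eventuallyEq (f := fun s => β * k * (Real.exp (-μ * s) * F s) + ρ₀ (τ - s) * Real.exp (-μ * s)) _ heq
    have hρ₀' : HasDerivAt (fun s => ρ₀ (τ - s)) (-(deriv ρ₀ (τ - t))) t := by
      have h := ((hρ₀ (τ - t)).hasDerivAt).comp t ((hasDerivAt_const t τ).sub (hasDerivAt_id t))
      simpa [Function.comp_def] using h
    exact ((((hμe t).mul (hF t)).const_mul (β * k)).add (hρ₀'.mul (hμe t)))
  -- derivative in τ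
  have hDτ : HasDerivAt (fun s => g t s) (deriv ρ₀ (τ - t) * Real.exp (-μ * t)) τ := by
    have heq : (fun s => g t s) =ᶠ[nhds τ]
        (fun s => β * k * (Real.exp (-μ * t) * F t) + ρ₀ (s - t) * Real.exp (-μ * t)) := by
      filter_upwards [Filter.Tendsto.eventually_const_lt htτ (Filter.tendsto_id)] with s hs
      simp only [id] at hs
      rw [hg t s, min_eq_left hs.le, hsub t]
    apply HasDerivAt.congr_of_eventuallyEq (f := fun s => β * k * (Real.exp (-μ * t) * F t) + ρ₀ (s - t) * Real.exp (-μ * t)) _ heq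
    have hρ₀' : HasDerivAt (fun s => ρ₀ (s - t)) (deriv ρ₀ (τ - t)) τ := by
      have h := ((hρ₀ (τ - t)).hasDerivAt).comp τ ((hasDerivAt_id τ).sub (hasDerivAt_const τ t))
      simpa [Function.comp_def, Pi.sub_apply] using h
    simpa [Pi.add_def] using (hasDerivAt_const τ (β * k * (Real.exp (-μ * t) * F t))).add (hρ₀'.mul_const (Real.exp (-μ * t)))
  rw [hDt.deriv, hDτ.deriv, hg t τ, min_eq_left htτ.le, hsub t]
  have he : Real.exp (-μ * t) * Real.exp (μ * t) = 1 := by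
    rw [← Real.exp_add]; simp
  linear_combination (β * k * ρS t * ρI t) * he
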